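/- Let P₀, …, P_m be orthogonal projections on a finite-dimensional Hilbert space such that for each i the anticommutator sum satisfies Σ_{j: P_iP_j≠P_jP_i} (P_iP_j + P_jP_i) ≥ −(1/(m+1))(P_i + Σ_{j: P_iP_j≠P_jP_i} P_j) in the positive semidefinite ordering. Then (Σ_{i=0}^m P_i)² ≥ (1/(m+1))·Σ_{i=0}^m P_i. -/

import Mathlib

open Finset Classical

noncomputable section

local notation "⟪" x ", " y "⟫" => @inner ℂ _ _ x y

section Aux

variable {E : Type*} [NormedAddCommGroup E] [InnerProductSpace ℂ E] [CompleteSpace E]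

lemma aux_pos_of_proj (T : E →L[ℂ] E) (h1 : IsSelfAdjoint T) (h2 : T ∘L T = T) :
    T.IsPositive := by
  refine ⟨ContinuousLinearMap.isSelfAdjoint_iff_isSymmetric.mp h1, fun x => ?_⟩
  have hs := (ContinuousLinearMap.isSelfAdjoint_iff_isSymmetric.mp h1)
  rw [ContinuousLinearMap.reApplyInnerSelf_apply]
  have h3 : ⟪T x, x⟫ = ⟪T x, T x⟫ := by
    conv_lhs => rw [← h2]
    exact hs (T x) x
  rw [h3]
  exact inner_self_nonneg

lemma aux_pos_mul (S T : E →L[ℂ] E) (hS1 : IsSelfAdjoint S) (hS2 : S ∘L S = S)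
    (hT1 : IsSelfAdjoint T) (hT2 : T ∘L T = T) (hc : S ∘L T = T ∘L S) :
    (S ∘L T).IsPositive := by
  have hsa : IsSelfAdjoint (S ∘L T) := by
    have : star (S * T) = S * T := by
      rw [star_mul, hT1.star_eq, hS1.star_eq]
      simpa [ContinuousLinearMap.mul_def] using hc.symm
    exact isSelfAdjoint_iff.mpr (by simpa [ContinuousLinearMap.mul_def] using this)
  apply aux_pos_of_proj _ hsa
  ext y
  have hc' : ∀ z, S (T z) = T (S z) := fun z => by
    have := congrArg (fun (A : E →L[ℂ] E) => A z) hc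
    simpa using this
  have hS2' : ∀ z, S (S z) = S z := fun z => by
    have := congrArg (fun (A : E →L[ℂ] E) => A z) hS2
    simpa using this
  have hT2' : ∀ z, T (T z) = T z := fun z => by
    have := congrArg (fun (A : E →L[ℂ] E) => A z) hT2
    simpa using this
  simp only [ContinuousLinearMap.comp_apply]
  simp only [← hc', hS2', hT2']

end Aux

lemma aux_swap {n : ℕ} {M : Type*} [AddCommMonoid M] (N : Fin n → Finset (Fin n))
    (hsym : ∀ i j, j ∈ N i ↔ i ∈ N j) (f : Fin n → Fin n → M) :
    ∑ i, ∑ j ∈ N i, f i j = ∑ i, ∑ j ∈ N i, f j i := by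
  have h1 : ∀ (g : Fin n → Fin n → M), (∑ i, ∑ j ∈ N i, g i j)
      = ∑ i, ∑ j, if j ∈ N i then g i j else 0 := by
    intro g
    refine Finset.sum_congr rfl fun i _ => ?_
    rw [Finset.sum_ite_mem, Finset.univ_inter]
  rw [h1, h1, Finset.sum_comm]
  exact Finset.sum_congr rfl fun x _ => Finset.sum_congr rfl fun y _ =>
    if_congr (hsym y x) rfl rfl


/-- Gap criterion: if `P₀,…,P_m` are orthogonal projections such that for each
`i` the sum of anticommutators with the non-commuting terms is bounded below by
`-(1/(m+1))` times the sum of the corresponding projections, then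
`(Σ Pᵢ)² ≥ (1/(m+1)) Σ Pᵢ`. -/
theorem stmt_7
    (E : Type*) [NormedAddCommGroup E] [InnerProductSpace ℂ E]
    [FiniteDimensional ℂ E]
    (m : ℕ) (P : Fin (m + 1) → (E →L[ℂ] E))
    (hproj : ∀ i, IsSelfAdjoint (P i) ∧ P i ∘L P i = P i)
    (hanti : ∀ i,
      ((∑ j ∈ univ.filter (fun j => P i ∘L P j ≠ P j ∘L P i),
          (P i ∘L P j + P j ∘L P i))
        + ((m + 1 : ℂ))⁻¹ •
          (P i + ∑ j ∈ univ.filter (fun j => P i ∘L P j ≠ P j ∘L P i),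
            P j)).IsPositive) :
    ((∑ i, P i) ∘L (∑ i, P i) - ((m + 1 : ℂ))⁻¹ • (∑ i, P i)).IsPositive := by
  haveI : CompleteSpace E := FiniteDimensional.complete ℂ E
  obtain rfl | hm1 : m = 0 ∨ 1 ≤ m := by omega
  · -- single projection: the expression is zero
    have hsum : (∑ i : Fin 1, P i) = P 0 := by simp
    rw [hsum]
    have hz : P 0 ∘L P 0 - (((0:ℕ) + 1 : ℂ))⁻¹ • P 0 = 0 := by
      rw [(hproj 0).2]
      norm_num
    rw [hz]
    exact ContinuousLinearMap.isPositive_zero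
  · -- main case : m ≥ 1
    set cr : ℝ := ((m : ℝ) + 1)⁻¹ with hcr
    have hcrc : ((m : ℂ) + 1)⁻¹ = (cr : ℂ) := by
      rw [hcr]; push_cast; ring
    have hHsa : IsSelfAdjoint (∑ i, P i) := by
      show star (∑ i, P i) = ∑ i, P i
      rw [star_sum]
      exact Finset.sum_congr rfl fun i _ => (hproj i).1.star_eq
    rw [ContinuousLinearMap.isPositive_def']
    constructor
    · apply IsSelfAdjoint.sub
      · have : star ((∑ i, P i) * (∑ i, P i)) = (∑ i, P i) * (∑ i, P i) := by
          rw [star_mul, hHsa.star_eq]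
        exact isSelfAdjoint_iff.mpr (by simpa [ContinuousLinearMap.mul_def] using this)
      · show star _ = _
        rw [hcrc, star_smul, hHsa.star_eq, Complex.star_def, Complex.conj_ofReal]
    intro x
    rw [ContinuousLinearMap.reApplyInnerSelf_apply]
    set p : Fin (m+1) → ℝ := fun i => RCLike.re ⟪P i x, x⟫ with hp
    set v : Fin (m+1) → Fin (m+1) → ℝ := fun i j => RCLike.re ⟪P i (P j x), x⟫ with hv
    set N : Fin (m+1) → Finset (Fin (m+1)) :=
      fun i => univ.filter (fun j => P i ∘L P j ≠ P j ∘L P i) with hN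
    -- the goal as real sums
    have hgoal : RCLike.re
        ⟪((∑ i, P i) ∘L (∑ i, P i) - ((m + 1 : ℂ))⁻¹ • (∑ i, P i)) x, x⟫
        = (∑ i, ∑ j, v i j) - cr * ∑ i, p i := by
      simp only [hv, hp, hcrc, ContinuousLinearMap.sub_apply,
        ContinuousLinearMap.smul_apply, ContinuousLinearMap.comp_apply,
        ContinuousLinearMap.sum_apply, map_sum, sum_inner, inner_sub_left,
        inner_smul_left, map_sub, RCLike.re_to_complex, Complex.conj_ofReal,
        Complex.re_ofReal_mul, Complex.re_sum]
      rw [Finset.sum_comm]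
    rw [hgoal]
    -- basic positivity facts
    have hpnn : ∀ i, 0 ≤ p i := fun i => by
      have := (aux_pos_of_proj (P i) (hproj i).1 (hproj i).2).2 x
      rwa [ContinuousLinearMap.reApplyInnerSelf_apply] at this
    have hvnn : ∀ i j, P i ∘L P j = P j ∘L P i → 0 ≤ v i j := fun i j hcm => by
      have := (aux_pos_mul (P i) (P j) (hproj i).1 (hproj i).2 (hproj j).1
        (hproj j).2 hcm).2 x
      rw [ContinuousLinearMap.reApplyInnerSelf_apply] at this
      simpa [hv, ContinuousLinearMap.comp_apply] using this
    have hvii : ∀ i, v i i = p i := fun i => by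
      have hPP : P i (P i x) = P i x := by
        have := congrArg (fun (A : E →L[ℂ] E) => A x) (hproj i).2
        simpa using this
      simp [hv, hp, hPP]
    -- the anticommutator hypothesis, pointwise
    have hanti' : ∀ i,
        0 ≤ (∑ j ∈ N i, (v i j + v j i)) + cr * (p i + ∑ j ∈ N i, p j) := by
      intro i
      have h := (hanti i).2 x
      rw [ContinuousLinearMap.reApplyInnerSelf_apply] at h
      simp only [hcrc, ContinuousLinearMap.add_apply, ContinuousLinearMap.sum_apply,
        ContinuousLinearMap.smul_apply, ContinuousLinearMap.comp_apply,
        inner_add_left, sum_inner, inner_smul_left, map_add, map_sum,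
        RCLike.re_to_complex, Complex.conj_ofReal, Complex.re_ofReal_mul,
        Complex.re_sum, Complex.add_re] at h
      simpa [hv, hp, hN] using h
    -- symmetry of the non-commuting relation
    have hsym : ∀ i j, (j ∈ N i) ↔ (i ∈ N j) := by
      intro i j
      simp only [hN, Finset.mem_filter, Finset.mem_univ, true_and]
      exact ne_comm
    have hcard : ∀ i, (N i).card ≤ m := by
      intro i
      have hsub : N i ⊆ univ.erase i := by
        intro j hj
        rw [Finset.mem_erase]
        refine ⟨?_, Finset.mem_univ j⟩
        rintro rfl
        simp [hN] at hj
      have := Finset.card_le_card hsub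
      simpa [Finset.card_erase_of_mem, Finset.card_univ] using this
    -- abbreviations
    set S := ∑ i, p i with hS
    set W := ∑ i, ∑ j ∈ N i, v i j with hW
    set D := ∑ i, ∑ j ∈ N i, p j with hD
    have hSnn : 0 ≤ S := Finset.sum_nonneg fun i _ => hpnn i
    -- step 1 : dropping commuting cross terms
    have h1 : S + W ≤ ∑ i, ∑ j, v i j := by
      rw [hS, hW, ← Finset.sum_add_distrib]
      refine Finset.sum_le_sum fun i _ => ?_
      have hsplit : (∑ j, v i j) = (∑ j ∈ N i, v i j)
          + ∑ j ∈ univ.filter (fun j => ¬ (P i ∘L P j ≠ P j ∘L P i)), v i j := by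
        rw [hN]
        exact (Finset.sum_filter_add_sum_filter_not univ _ _).symm
      rw [hsplit]
      have hmem : i ∈ univ.filter (fun j => ¬ (P i ∘L P j ≠ P j ∘L P i)) := by simp
      have hle : p i ≤
          ∑ j ∈ univ.filter (fun j => ¬ (P i ∘L P j ≠ P j ∘L P i)), v i j := by
        rw [← hvii i]
        exact Finset.single_le_sum
          (fun j hj => hvnn i j (not_not.mp (Finset.mem_filter.mp hj).2)) hmem
      linarith
    -- step 2 : symmetrized sum equals 2W
    have h2 : (∑ i, ∑ j ∈ N i, (v i j + v j i)) = W + W := by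
      have hsw := aux_swap N hsym v
      calc ∑ i, ∑ j ∈ N i, (v i j + v j i)
          = (∑ i, ∑ j ∈ N i, v i j) + ∑ i, ∑ j ∈ N i, v j i := by
            rw [← Finset.sum_add_distrib]
            exact Finset.sum_congr rfl fun i _ => Finset.sum_add_distrib
        _ = W + W := by rw [← hsw, hW]
    -- step 3 : summing the anticommutator bound
    have h3 : 0 ≤ 2 * W + cr * S + cr * D := by
      have hsum := Finset.sum_nonneg (s := univ)
        (f := fun i => (∑ j ∈ N i, (v i j + v j i)) + cr * (p i + ∑ j ∈ N i, p j))
        (fun i _ => hanti' i)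
      have heq : (∑ i, ((∑ j ∈ N i, (v i j + v j i)) + cr * (p i + ∑ j ∈ N i, p j)))
          = 2 * W + cr * S + cr * D := by
        rw [Finset.sum_add_distrib, h2]
        have : (∑ i, cr * (p i + ∑ j ∈ N i, p j)) = cr * S + cr * D := by
          rw [← Finset.mul_sum, Finset.sum_add_distrib, hS, hD, mul_add]
        rw [this]; ring
      rw [heq] at hsum
      exact hsum
    -- step 4 : D ≤ m S
    have hD2 : D = ∑ i, ((N i).card : ℝ) * p i := by
      rw [hD, aux_swap N hsym (fun i j => p j)]
      exact Finset.sum_congr rfl fun i _ => by rw [Finset.sum_const, nsmul_eq_mul]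
    have h4 : D ≤ (m : ℝ) * S := by
      rw [hD2, hS, Finset.mul_sum]
      exact Finset.sum_le_sum fun i _ =>
        mul_le_mul_of_nonneg_right (by exact_mod_cast hcard i) (hpnn i)
    -- arithmetic
    have hmpos : (0:ℝ) < (m : ℝ) + 1 := by positivity
    have hcrpos : 0 < cr := by rw [hcr]; positivity
    have hcreq : cr * ((m : ℝ) + 1) = 1 := inv_mul_cancel₀ (ne_of_gt hmpos)
    have hm1' : (1:ℝ) ≤ (m : ℝ) := by exact_mod_cast hm1
    have hkey3 : cr * D ≤ S - cr * S := by
      have ha : cr * D ≤ cr * ((m : ℝ) * S) := mul_le_mul_of_nonneg_left h4 hcrpos.le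
      have hb : cr * ((m : ℝ) * S) = S - cr * S := by linear_combination S * hcreq
      linarith
    have hcrhalf : cr ≤ 1 / 2 := by
      rw [hcr]
      rw [show (1:ℝ)/2 = 2⁻¹ by norm_num]
      apply inv_anti₀ (by norm_num)
      linarith
    have hfin : 0 ≤ 1 / 2 * S - cr * S := by nlinarith [hcrhalf, hSnn]
    linarith [h1, h3, hkey3, hfin]
end
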